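/- arXiv:2401.08997 — 3 statements merged into one kernel-verified Lean document; each statement's English description precedes it below -/
import Mathlib

section
/- For every real number k and every complex number z with Im z > 0, P_k(z − 1/2) + P_k(z) = (2 + 2^{1−k}) · P_k(2z) − 2^{1−k} · P_k(4z). -/
/-!
The identity is one for the Lambert series `∑ n⁻ˢ wⁿ / (1 - wⁿ)` in `w = e^{2πiz}`, with
`z ↦ z - 1/2, 2z, 4z` becoming `w ↦ -w, w², w⁴`. Split the series into even and odd `n`:
the even part of the series at `±w` is `2⁻ˢ` times the series at `w²`, while for odd `n`
the terms at `-w` and `w` add up to twice the term at `w²`, because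
`x/(1-x) - x/(1+x) = 2x²/(1-x²)`. The odd part at `w²` is in turn the series at `w²` minus
`2⁻ˢ` times the series at `w⁴`. -/

/-- P_k(z) = Σ_{n=1}^∞ n^{−k} · e^{2πinz}/(1 − e^{2πinz}), for real k and Im z > 0. -/
noncomputable def P (k : ℝ) (z : ℂ) : ℂ :=
  ∑' n : ℕ+, (n : ℂ) ^ (-(k : ℂ)) *
    (Complex.exp (2 * Real.pi * Complex.I * n * z) /
      (1 - Complex.exp (2 * Real.pi * Complex.I * n * z)))

open Complex

namespace Lambert

noncomputable def term (s : ℂ) (w : ℂ) (n : ℕ) : ℂ :=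
  (n : ℂ) ^ (-s) * (w ^ n / (1 - w ^ n))

noncomputable def series (s : ℂ) (w : ℂ) : ℂ := ∑' n : ℕ, term s w n

variable (s : ℂ) {w : ℂ}

-- `w⁰ / (1 - w⁰) = 1 / 0 = 0`, so summing over `ℕ` rather than `ℕ+` changes nothing.
@[simp]
lemma term_zero (w : ℂ) : term s w 0 = 0 := by
  simp [term]

lemma norm_term_le (w : ℂ) (n : ℕ) :
    ‖term s w n‖ ≤ ‖(n : ℂ) ^ ⌈-s.re⌉₊ * w ^ n / (1 - w ^ n)‖ := by
  rcases Nat.eq_zero_or_pos n with rfl | hn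
  · simp
  have hpow : ‖(n : ℂ) ^ (-s)‖ ≤ ‖(n : ℂ) ^ ⌈-s.re⌉₊‖ := by
    rw [norm_natCast_cpow_of_pos hn, norm_pow, norm_natCast, ← Real.rpow_natCast, neg_re]
    exact Real.rpow_le_rpow_of_exponent_le (mod_cast hn) (Nat.le_ceil _)
  rw [term, mul_div_assoc, norm_mul, norm_mul]
  gcongr

lemma summable_term (hw : ‖w‖ < 1) : Summable (term s w) :=
  (summable_norm_pow_mul_geometric_div_one_sub _ hw).norm.of_norm_bounded (norm_term_le s w)

lemma term_two_mul (w : ℂ) (m : ℕ) : term s w (2 * m) = 2 ^ (-s) * term s (w ^ 2) m := by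
  rw [term, term, Nat.cast_mul, natCast_mul_natCast_cpow, pow_mul, Nat.cast_ofNat, mul_assoc]

lemma div_one_sub_add_neg_div_one_sub {x : ℂ} (hx : x ^ 2 ≠ 1) :
    x / (1 - x) + -x / (1 - -x) = 2 * (x ^ 2 / (1 - x ^ 2)) := by
  have h₁ : 1 - x ≠ 0 := fun h => hx (by linear_combination (-1 - x) * h)
  have h₂ : 1 - -x ≠ 0 := fun h => hx (by linear_combination (x - 1) * h)
  have h₃ : 1 - x ^ 2 ≠ 0 := sub_ne_zero.2 (Ne.symm hx)
  field_simp
  ring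

lemma pow_ne_one_of_norm_lt_one (hw : ‖w‖ < 1) {n : ℕ} (hn : n ≠ 0) : w ^ n ≠ 1 := by
  intro h
  have := pow_lt_one₀ (norm_nonneg w) hw hn
  rw [← norm_pow, h, norm_one] at this
  exact this.false

lemma term_neg_add_term_odd (hw : ‖w‖ < 1) (m : ℕ) :
    term s (-w) (2 * m + 1) + term s w (2 * m + 1) = 2 * term s (w ^ 2) (2 * m + 1) := by
  have hx : (w ^ (2 * m + 1)) ^ 2 ≠ 1 := by
    rw [← pow_mul]
    exact pow_ne_one_of_norm_lt_one hw (by lia)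
  have hsq : (w ^ 2) ^ (2 * m + 1) = (w ^ (2 * m + 1)) ^ 2 := by rw [← pow_mul, ← pow_mul, mul_comm]
  rw [term, term, term, (odd_two_mul_add_one m).neg_pow, hsq]
  linear_combination ((2 * m + 1 : ℕ) : ℂ) ^ (-s) * div_one_sub_add_neg_div_one_sub hx

lemma series_eq_add_tsum_odd (hw : ‖w‖ < 1) :
    series s w = 2 ^ (-s) * series s (w ^ 2) + ∑' m : ℕ, term s w (2 * m + 1) := by
  have h := summable_term s hw
  rw [series, ← tsum_even_add_odd (h.comp_injective (mul_right_injective₀ two_ne_zero))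
    (h.comp_injective fun a b hab => by lia)]
  simp only [term_two_mul, tsum_mul_left, series]

theorem series_neg_add_series (hw : ‖w‖ < 1) :
    series s (-w) + series s w =
      (2 + 2 * 2 ^ (-s)) * series s (w ^ 2) - 2 * 2 ^ (-s) * series s (w ^ 4) := by
  have hw' : ‖-w‖ < 1 := by rwa [norm_neg]
  have hw₂ : ‖w ^ 2‖ < 1 := by rw [norm_pow]; exact pow_lt_one₀ (norm_nonneg w) hw two_ne_zero
  have hodd : ∀ {v : ℂ}, ‖v‖ < 1 → Summable fun m : ℕ => term s v (2 * m + 1) :=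
    fun hv => (summable_term s hv).comp_injective fun a b hab => by lia
  have hodd_sum : ∑' m : ℕ, term s (-w) (2 * m + 1) + ∑' m : ℕ, term s w (2 * m + 1) =
      2 * ∑' m : ℕ, term s (w ^ 2) (2 * m + 1) := by
    rw [← (hodd hw').tsum_add (hodd hw), ← tsum_mul_left]
    exact tsum_congr (term_neg_add_term_odd s hw)
  rw [series_eq_add_tsum_odd s hw', series_eq_add_tsum_odd s hw, neg_sq,
    show w ^ 4 = (w ^ 2) ^ 2 by ring]
  linear_combination hodd_sum + 2 * (series_eq_add_tsum_odd s hw₂).symm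

end Lambert

lemma exp_two_pi_I_mul_natCast_mul (n : ℕ) (z : ℂ) :
    exp (2 * Real.pi * I * (n * z)) = exp (2 * Real.pi * I * z) ^ n := by
  rw [← exp_nat_mul]
  ring_nf

lemma exp_two_pi_I_mul_sub_half (z : ℂ) :
    exp (2 * Real.pi * I * (z - 1 / 2)) = -exp (2 * Real.pi * I * z) := by
  rw [show 2 * Real.pi * I * (z - 1 / 2) = 2 * Real.pi * I * z - Real.pi * I by ring, exp_sub,
    exp_pi_mul_I, div_neg, div_one]

lemma P_eq_series (k : ℝ) (z : ℂ) : P k z = Lambert.series k (exp (2 * Real.pi * I * z)) := by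
  rw [Lambert.series, ← tsum_pnat_eq_tsum_of_eq_zero (Lambert.term_zero _ _), P]
  congr! 3 with n
  rw [mul_assoc _ (n : ℂ), exp_two_pi_I_mul_natCast_mul, Lambert.term]

lemma ofReal_two_rpow_one_sub (k : ℝ) :
    (((2 : ℝ) ^ (1 - k) : ℝ) : ℂ) = 2 * 2 ^ (-(k : ℂ)) := by
  rw [sub_eq_add_neg, Real.rpow_add two_pos, Real.rpow_one, ofReal_mul,
    ofReal_cpow zero_le_two]
  push_cast
  rfl

theorem doubling (k : ℝ) (z : ℂ) (hz : 0 < z.im) :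
    P k (z - 1 / 2) + P k z =
      (2 + (((2 : ℝ) ^ (1 - k) : ℝ) : ℂ)) * P k (2 * z)
        - (((2 : ℝ) ^ (1 - k) : ℝ) : ℂ) * P k (4 * z) := by
  have hw : ‖exp (2 * Real.pi * I * z)‖ < 1 := UpperHalfPlane.norm_exp_two_pi_I_lt_one ⟨z, hz⟩
  have h₂ := exp_two_pi_I_mul_natCast_mul 2 z
  have h₄ := exp_two_pi_I_mul_natCast_mul 4 z
  push_cast at h₂ h₄
  simp only [P_eq_series, exp_two_pi_I_mul_sub_half, h₂, h₄, ofReal_two_rpow_one_sub]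
  exact Lambert.series_neg_add_series _ hw
end

section
/- For every real number k and every complex number z with Im z > 0, P_k(z − 1/3) + P_k(z) + P_k(z + 1/3) = (3 + 3^{1−k}) · P_k(3z) − 3^{1−k} · P_k(9z). -/
open Complex

lemma sum_div_one_sub_mul_cube_roots {K : Type*} [Field K] {x ω : K} (hω : ω ^ 2 + ω + 1 = 0)
    (hx : 1 - x ^ 3 ≠ 0) :
    x * ω ^ 2 / (1 - x * ω ^ 2) + x / (1 - x) + x * ω / (1 - x * ω) = 3 * (x ^ 3 / (1 - x ^ 3)) := by
  have hfactor : 1 - x ^ 3 = (1 - x * ω ^ 2) * (1 - x) * (1 - x * ω) := by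
    linear_combination (x - x ^ 2 * ω + x ^ 3 * ω - x ^ 3) * hω
  rw [hfactor] at hx ⊢
  obtain ⟨⟨h₂, h₀⟩, h₁⟩ := by simpa only [mul_ne_zero_iff] using hx
  field_simp
  linear_combination (x - 2 * x ^ 2 * ω + 3 * x ^ 3 * (ω - 1)) * hω

lemma hasSum_ite_dvd_iff {α : Type*} [AddCommMonoid α] [TopologicalSpace α] {f : ℕ+ → α}
    {a : α} (d : ℕ+) :
    HasSum (fun n : ℕ+ ↦ if (d : ℕ) ∣ n then f n else 0) a ↔ HasSum (fun m ↦ f (d * m)) a := by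
  rw [← (mul_right_injective d).hasSum_iff]
  · simp [Function.comp_def]
  · rintro n hn
    rw [if_neg]
    rintro ⟨m, hm⟩
    exact hn ⟨⟨m, Nat.pos_of_mul_pos_left (hm ▸ n.pos)⟩, PNat.eq hm.symm⟩

noncomputable def lambertTerm (s q : ℂ) (n : ℕ+) : ℂ :=
  (n : ℂ) ^ s * (q ^ (n : ℕ) / (1 - q ^ (n : ℕ)))

noncomputable def lambertSeries (s q : ℂ) : ℂ :=
  ∑' n, lambertTerm s q n

lemma norm_pow_div_one_sub_pow_le {q : ℂ} (hq : ‖q‖ < 1) (n : ℕ+) :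
    ‖q ^ (n : ℕ) / (1 - q ^ (n : ℕ))‖ ≤ ‖q‖ ^ (n : ℕ) / (1 - ‖q‖) := by
  have hpow : ‖q‖ ^ (n : ℕ) ≤ ‖q‖ := pow_le_of_le_one (norm_nonneg q) hq.le n.ne_zero
  have hden : 1 - ‖q‖ ≤ ‖1 - q ^ (n : ℕ)‖ :=
    calc 1 - ‖q‖ ≤ ‖(1 : ℂ)‖ - ‖q ^ (n : ℕ)‖ := by rw [norm_one, norm_pow]; linarith
      _ ≤ _ := norm_sub_norm_le _ _
  rw [norm_div, norm_pow]
  exact div_le_div₀ (by positivity) le_rfl (sub_pos.2 hq) hden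

lemma summable_lambertTerm (s : ℂ) {q : ℂ} (hq : ‖q‖ < 1) : Summable (lambertTerm s q) := by
  have hgeom := (summable_pow_mul_geometric_of_norm_lt_one ⌈s.re⌉₊
    (by rwa [norm_norm] : ‖‖q‖‖ < 1)).mul_right (1 - ‖q‖)⁻¹
  refine .of_norm_bounded (hgeom.comp_injective PNat.coe_injective) fun n ↦ ?_
  rw [lambertTerm, norm_mul, norm_natCast_cpow_of_pos n.pos, Function.comp_apply, mul_assoc,
    ← div_eq_mul_inv]
  refine mul_le_mul ?_ (norm_pow_div_one_sub_pow_le hq n) (norm_nonneg _) (by positivity)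
  exact Real.rpow_le_rpow_of_exponent_le (Nat.one_le_cast.mpr n.pos) (Nat.le_ceil _) |>.trans_eq
    (Real.rpow_natCast _ _)

lemma hasSum_lambertSeries (s : ℂ) {q : ℂ} (hq : ‖q‖ < 1) :
    HasSum (lambertTerm s q) (lambertSeries s q) :=
  (summable_lambertTerm s hq).hasSum

lemma lambertTerm_mul_cube_roots (s : ℂ) {q ζ : ℂ} (hq : ‖q‖ < 1) (hζ : IsPrimitiveRoot ζ 3)
    (n : ℕ+) :
    lambertTerm s (q * ζ ^ 2) n + lambertTerm s q n + lambertTerm s (q * ζ) n =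
      3 * lambertTerm s (q ^ 3) n +
        if 3 ∣ (n : ℕ) then 3 * (lambertTerm s q n - lambertTerm s (q ^ 3) n) else 0 := by
  have hx : 1 - (q ^ (n : ℕ)) ^ 3 ≠ 0 := by
    refine sub_ne_zero.2 fun h ↦ ?_
    have : ‖(q ^ (n : ℕ)) ^ 3‖ < 1 := by
      rw [norm_pow, norm_pow]
      exact pow_lt_one₀ (by positivity) (pow_lt_one₀ (norm_nonneg _) hq n.ne_zero) three_ne_zero
    simp [← h] at this
  simp only [lambertTerm, mul_pow, pow_right_comm _ 2 (n : ℕ), pow_right_comm q 3 (n : ℕ)]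
  split_ifs with h3
  · simp only [(hζ.pow_eq_one_iff_dvd n).2 h3, one_pow, mul_one]
    ring
  · have hω : IsPrimitiveRoot (ζ ^ (n : ℕ)) 3 :=
      hζ.pow_of_coprime n ((Nat.Prime.coprime_iff_not_dvd Nat.prime_three).2 h3).symm
    have hω' : (ζ ^ (n : ℕ)) ^ 2 + ζ ^ (n : ℕ) + 1 = 0 := by
      have := hω.geom_sum_eq_zero (by norm_num)
      simp only [Finset.sum_range_succ, Finset.sum_range_zero] at this
      linear_combination this
    rw [← mul_add, ← mul_add, sum_div_one_sub_mul_cube_roots hω' hx]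
    ring

lemma lambertTerm_three_mul (s q : ℂ) (m : ℕ+) :
    lambertTerm s q (3 * m) = 3 ^ s * lambertTerm s (q ^ 3) m := by
  simp only [lambertTerm, PNat.mul_coe, PNat.val_ofNat, Nat.cast_mul, Nat.cast_ofNat, pow_mul]
  rw [← Nat.cast_ofNat (R := ℂ), natCast_mul_natCast_cpow]
  ring

theorem lambertSeries_trebling (s : ℂ) {q ζ : ℂ} (hq : ‖q‖ < 1) (hζ : IsPrimitiveRoot ζ 3) :
    lambertSeries s (q * ζ ^ 2) + lambertSeries s q + lambertSeries s (q * ζ) =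
      (3 + 3 * 3 ^ s) * lambertSeries s (q ^ 3) - 3 * 3 ^ s * lambertSeries s (q ^ 9) := by
  have hζ₁ : ‖ζ‖ = 1 := hζ.norm'_eq_one three_ne_zero
  have hpow (m : ℕ) (hm : m ≠ 0) : ‖q ^ m‖ < 1 := by
    rw [norm_pow]; exact pow_lt_one₀ (norm_nonneg _) hq hm
  have hcorrection : HasSum
      (fun n : ℕ+ ↦ if 3 ∣ (n : ℕ) then 3 * (lambertTerm s q n - lambertTerm s (q ^ 3) n) else 0)
      (3 * 3 ^ s * (lambertSeries s (q ^ 3) - lambertSeries s (q ^ 9))) := by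
    refine (hasSum_ite_dvd_iff 3).2 ?_
    refine (((hasSum_lambertSeries s (hpow 3 (by norm_num))).sub
      (hasSum_lambertSeries s (hpow 9 (by norm_num)))).mul_left (3 * 3 ^ s)).congr_fun fun m ↦ ?_
    rw [lambertTerm_three_mul, lambertTerm_three_mul, ← pow_mul]
    ring
  have hsum := ((hasSum_lambertSeries s (q := q * ζ ^ 2) (by simpa [hζ₁] using hq)).add
    (hasSum_lambertSeries s hq)).add (hasSum_lambertSeries s (q := q * ζ) (by simpa [hζ₁] using hq))
  simp only [lambertTerm_mul_cube_roots s hq hζ] at hsum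
  rw [hsum.unique (((hasSum_lambertSeries s (hpow 3 (by norm_num))).mul_left 3).add hcorrection)]
  ring

lemma P_eq_lambertSeries (k : ℝ) (z : ℂ) :
    P k z = lambertSeries (-k) (cexp (2 * Real.pi * I * z)) :=
  tsum_congr fun n ↦ by rw [lambertTerm, ← Complex.exp_nat_mul]; ring_nf

theorem trebling (k : ℝ) (z : ℂ) (hz : 0 < z.im) :
    P k (z - 1 / 3) + P k z + P k (z + 1 / 3) =
      (3 + (((3 : ℝ) ^ (1 - k) : ℝ) : ℂ)) * P k (3 * z)
        - (((3 : ℝ) ^ (1 - k) : ℝ) : ℂ) * P k (9 * z) := by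
  set q := cexp (2 * Real.pi * I * z)
  set ζ := cexp (2 * Real.pi * I / 3)
  have hq : ‖q‖ < 1 := UpperHalfPlane.norm_exp_two_pi_I_lt_one ⟨z, hz⟩
  have hζ : IsPrimitiveRoot ζ 3 := by simpa using Complex.isPrimitiveRoot_exp 3 (by norm_num)
  have h_sub : cexp (2 * Real.pi * I * (z - 1 / 3)) = q * ζ ^ 2 := by
    rw [← Complex.exp_nat_mul, ← Complex.exp_add, Complex.exp_eq_exp_iff_exists_int]
    exact ⟨-1, by push_cast; ring⟩
  have h_add : cexp (2 * Real.pi * I * (z + 1 / 3)) = q * ζ := by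
    rw [← Complex.exp_add]; ring_nf
  have h_three : cexp (2 * Real.pi * I * (3 * z)) = q ^ 3 := by
    rw [← Complex.exp_nat_mul]; push_cast; ring_nf
  have h_nine : cexp (2 * Real.pi * I * (9 * z)) = q ^ 9 := by
    rw [← Complex.exp_nat_mul]; push_cast; ring_nf
  have h_coeff : (((3 : ℝ) ^ (1 - k) : ℝ) : ℂ) = 3 * 3 ^ (-(k : ℂ)) := by
    rw [Complex.ofReal_cpow (by norm_num)]
    push_cast
    rw [sub_eq_add_neg, Complex.cpow_add _ _ three_ne_zero, Complex.cpow_one]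
  simp only [P_eq_lambertSeries, h_sub, h_add, h_three, h_nine, h_coeff]
  exact lambertSeries_trebling _ hq hζ
end

section
/- Σ_{n=1}^∞ 1/sinh^2(nπ) = 1/6 − 1/(2π); equivalently, 1/π = 1/3 − 2·Σ_{n=1}^∞ 1/sinh^2(nπ). -/
/-!
With `q = e^{-2π}` one has `1 / sinh² (nπ) = 4 qⁿ / (1 - qⁿ)²`, and expanding
`qⁿ / (1 - qⁿ)² = ∑_m m q^{nm}` turns the series into the Lambert series
`4 ∑_N σ₁(N) q^N`, i.e. the `q`-expansion of the weight-two Eisenstein series `G₂` at `z = i`.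
The quasi-modular transformation `G₂(z) = z⁻² G₂(-1/z) + 2πi / z` evaluated at the fixed point
`z = i` of `S` gives `G₂(i) = π`, while the `q`-expansion gives `G₂(i) = π²/3 - 8π² ∑ σ₁(N) q^N`.
-/

open Real ArithmeticFunction EisensteinSeries
open scoped ArithmeticFunction.sigma

theorem tsum_pow_div_one_sub_sq_eq_tsum_sigma {𝕜 : Type*} [NontriviallyNormedField 𝕜]
    [CompleteSpace 𝕜] [NormSMulClass ℤ 𝕜] {r : 𝕜} (hr : ‖r‖ < 1) :
    ∑' n : ℕ+, r ^ (n : ℕ) / (1 - r ^ (n : ℕ)) ^ 2 = ∑' n : ℕ+, σ 1 n * r ^ (n : ℕ) := by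
  rw [← tsum_prod_pow_eq_tsum_sigma 1 hr]
  refine tsum_congr fun d => ?_
  have hrd : ‖r ^ (d : ℕ)‖ < 1 := by
    rw [norm_pow]
    exact pow_lt_one₀ (norm_nonneg _) hr d.ne_zero
  rw [← tsum_coe_mul_geometric_of_norm_lt_one hrd,
    ← tsum_pnat_eq_tsum_of_eq_zero (f := fun n : ℕ => (n : 𝕜) * (r ^ (d : ℕ)) ^ n) (by simp)]
  simp [pow_mul]

theorem one_div_sinh_sq (x : ℝ) :
    1 / sinh x ^ 2 = 4 * exp (-2 * x) / (1 - exp (-2 * x)) ^ 2 := by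
  have hexp : exp (-2 * x) = exp (-x) ^ 2 := by
    rw [← exp_nat_mul]
    ring_nf
  have hfactor : 1 - exp (-2 * x) = exp (-x) * (2 * sinh x) := by
    have hinv : exp (-x) * exp x = 1 := by rw [← exp_add]; simp
    rw [sinh_eq, hexp]
    linear_combination -hinv
  rw [hfactor, hexp, mul_pow, mul_comm 4, mul_div_mul_left _ _ (by positivity)]
  ring

theorem G2_I : G2 UpperHalfPlane.I = π := by
  have hS : ModularGroup.S • UpperHalfPlane.I = UpperHalfPlane.I := by
    rw [UpperHalfPlane.modular_S_smul]
    ext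
    simp [UpperHalfPlane.coe_I]
  have h := G2_S_transform UpperHalfPlane.I
  rw [hS, UpperHalfPlane.coe_I, Complex.I_sq] at h
  field_simp at h
  linear_combination h / 2

theorem tsum_sigma_one_mul_exp_neg_two_pi_pow :
    ∑' n : ℕ+, (σ 1 n : ℝ) * exp (-2 * π) ^ (n : ℕ) = 1 / 24 - 1 / (8 * π) := by
  have hq : Complex.exp (2 * π * Complex.I * UpperHalfPlane.I) = (exp (-2 * π) : ℝ) := by
    rw [UpperHalfPlane.coe_I, Complex.ofReal_exp]
    congr 1
    push_cast
    linear_combination (2 * π : ℂ) * Complex.I_sq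
  have h := G2_eq_tsum_cexp UpperHalfPlane.I
  rw [G2_I, hq, riemannZeta_two] at h
  set S := ∑' n : ℕ+, (σ 1 n : ℝ) * exp (-2 * π) ^ (n : ℕ)
  have hS : ∑' n : ℕ+, (σ 1 n : ℂ) * ((exp (-2 * π) : ℝ) : ℂ) ^ (n : ℕ) = S := by
    rw [Complex.ofReal_tsum]
    push_cast
    rfl
  rw [hS] at h
  have hreal : π = 2 * (π ^ 2 / 6) - 8 * π ^ 2 * S := by exact_mod_cast h
  have hS_mul : 8 * π * S = π / 3 - 1 := by
    refine mul_left_cancel₀ pi_ne_zero ?_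
    linear_combination hreal
  field_simp
  linear_combination 24 * hS_mul

theorem sinhPi :
    (∑' n : ℕ+, 1 / Real.sinh ((n : ℝ) * Real.pi) ^ 2) = 1 / 6 - 1 / (2 * Real.pi) ∧
    1 / Real.pi = 1 / 3 - 2 * ∑' n : ℕ+, 1 / Real.sinh ((n : ℝ) * Real.pi) ^ 2 := by
  set q := exp (-2 * π)
  have hq : ‖q‖ < 1 := by
    rw [norm_of_nonneg (exp_pos _).le, exp_lt_one_iff]
    linarith [pi_pos]
  have hterm (n : ℕ+) :
      1 / sinh ((n : ℝ) * π) ^ 2 = 4 * (q ^ (n : ℕ) / (1 - q ^ (n : ℕ)) ^ 2) := by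
    rw [one_div_sinh_sq, ← exp_nat_mul]
    ring_nf
  have hsum : ∑' n : ℕ+, 1 / sinh ((n : ℝ) * π) ^ 2 = 1 / 6 - 1 / (2 * π) := by
    rw [tsum_congr hterm, tsum_mul_left, tsum_pow_div_one_sub_sq_eq_tsum_sigma hq,
      tsum_sigma_one_mul_exp_neg_two_pi_pow]
    ring
  exact ⟨hsum, by rw [hsum]; ring⟩
end
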